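/- arXiv:2010.14864 — 6 statements merged into one kernel-verified Lean document; each statement's English description precedes it below -/
import Mathlib

section
/- Let p, p̂, ε ≥ 0 and 0 < c ≤ 1. If |p̂ - p| ≤ c · max{√(pε), ε}, then (√p̂ - √p)² ≤ cε. -/
/-!
Write `a = √p`, `b = √p̂`, `s = √ε`, so that `|p̂ - p| = (a + b) |b - a|`. If the maximum is `ε`,
then `(b - a)² ≤ (a + b) |b - a| ≤ c s²` directly. Otherwise `s² < a s`, so `a > 0`, and dividing
`a |b - a| ≤ c a s` by `a` gives `|b - a| ≤ c s`, whence `(b - a)² ≤ c² s² ≤ c s²`.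
-/

lemma abs_sq_sub_sq_of_nonneg {a b : ℝ} (ha : 0 ≤ a) (hb : 0 ≤ b) :
    |b ^ 2 - a ^ 2| = (b + a) * |b - a| := by
  rw [sq_sub_sq, abs_mul, abs_of_nonneg (add_nonneg hb ha)]

lemma sq_sub_le_abs_sq_sub_sq {a b : ℝ} (ha : 0 ≤ a) (hb : 0 ≤ b) :
    (b - a) ^ 2 ≤ |b ^ 2 - a ^ 2| := by
  have hba : |b - a| ≤ b + a := abs_sub_le_iff.mpr ⟨by linarith, by linarith⟩
  rw [abs_sq_sub_sq_of_nonneg ha hb, ← sq_abs, sq]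
  exact mul_le_mul_of_nonneg_right hba (abs_nonneg _)

lemma sq_sub_le_of_abs_sq_sub_sq_le {a b s c : ℝ} (ha : 0 ≤ a) (hb : 0 ≤ b) (hs : 0 ≤ s)
    (hc0 : 0 ≤ c) (hc1 : c ≤ 1) (h : |b ^ 2 - a ^ 2| ≤ c * max (a * s) (s ^ 2)) :
    (b - a) ^ 2 ≤ c * s ^ 2 := by
  rcases le_or_gt (a * s) (s ^ 2) with hmax | hmax
  · rw [max_eq_right hmax] at h
    exact (sq_sub_le_abs_sq_sub_sq ha hb).trans h
  · rw [max_eq_left hmax.le] at h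
    have has : 0 < a * s := (sq_nonneg s).trans_lt hmax
    have ha0 : 0 < a := pos_of_mul_pos_left has hs
    have hdiff : |b - a| ≤ c * s := by
      refine le_of_mul_le_mul_left ?_ ha0
      calc a * |b - a| ≤ (b + a) * |b - a| := by gcongr; linarith
        _ = |b ^ 2 - a ^ 2| := (abs_sq_sub_sq_of_nonneg ha hb).symm
        _ ≤ a * (c * s) := by linarith
    calc (b - a) ^ 2 = |b - a| ^ 2 := (sq_abs _).symm
      _ ≤ (c * s) ^ 2 := by gcongr
      _ = c ^ 2 * s ^ 2 := mul_pow c s 2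
      _ ≤ c * s ^ 2 := by gcongr; nlinarith

/-- If `|p̂ - p| ≤ c · max(√(pε), ε)` then `(√p̂ - √p)² ≤ cε`. -/
theorem sqrt_perturbation_bound (p phat eps c : ℝ)
    (hp : 0 ≤ p) (hphat : 0 ≤ phat) (heps : 0 ≤ eps)
    (hc0 : 0 < c) (hc1 : c ≤ 1)
    (h : |phat - p| ≤ c * max (Real.sqrt (p * eps)) eps) :
    (Real.sqrt phat - Real.sqrt p)^2 ≤ c * eps := by
  rw [Real.sqrt_mul hp] at h
  have key := sq_sub_le_of_abs_sq_sub_sq_le (Real.sqrt_nonneg p) (Real.sqrt_nonneg phat)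
    (Real.sqrt_nonneg eps) hc0.le hc1
    (by rwa [Real.sq_sqrt hp, Real.sq_sqrt hphat, Real.sq_sqrt heps])
  rwa [Real.sq_sqrt heps] at key
end

section
/- For all reals a, b ≥ 0 with (1/2)a ≤ b ≤ (3/2)a, we have a·ln(a/b) ≤ (a - b) + 9(√a - √b)². -/
/-- For `a/2 ≤ b ≤ 3a/2`, `a·ln(a/b) ≤ (a - b) + 9(√a - √b)²`. -/
theorem log_bound_middle_case (a b : ℝ) (ha : 0 ≤ a) (hb : 0 ≤ b)
    (h1 : (1/2) * a ≤ b) (h2 : b ≤ (3/2) * a) :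
    a * Real.log (a / b) ≤ (a - b) + 9 * (Real.sqrt a - Real.sqrt b)^2 := by
  rcases eq_or_lt_of_le ha with h | hapos
  · have hb0 : b = 0 := le_antisymm (by linarith) hb
    simp [← h, hb0]
  · have hbpos : 0 < b := by linarith
    set s := Real.sqrt a with hs
    set t := Real.sqrt b with ht
    have hs2 : s ^ 2 = a := Real.sq_sqrt ha
    have ht2 : t ^ 2 = b := Real.sq_sqrt hb
    have hspos : 0 < s := Real.sqrt_pos.mpr hapos
    have htpos : 0 < t := Real.sqrt_pos.mpr hbpos
    have hratio : a / b = (s / t) ^ 2 := by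
      rw [div_pow, hs2, ht2]
    have hlog : Real.log (a / b) = 2 * Real.log (s / t) := by
      rw [hratio, Real.log_pow]; push_cast; ring
    have hle : Real.log (s / t) ≤ s / t - 1 :=
      Real.log_le_sub_one_of_pos (div_pos hspos htpos)
    have key : a * Real.log (a / b) ≤ 2 * s ^ 2 * (s / t - 1) := by
      rw [hlog, ← hs2]
      nlinarith [sq_nonneg s]
    have hst : s ≤ 4 * t := by
      nlinarith [hs2, ht2, hspos.le, htpos.le]
    have poly : 2 * s ^ 2 * (s / t - 1) ≤ (a - b) + 9 * (s - t) ^ 2 := by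
      rw [div_sub_one htpos.ne', ← hs2, ← ht2]
      rw [← mul_div_assoc, div_le_iff₀ htpos]
      nlinarith [sq_nonneg (s - t), mul_nonneg (sq_nonneg (s - t)) (sub_nonneg.mpr hst)]
    linarith
end

section
/- Let X_i, X_j be random variables over {1,-1} with symmetric marginals (each uniform on {1,-1}) and joint distribution P_{ij} with α-value α. Let P^{ind} be the product of the two uniform marginals. Then H²(P_{ij}, P^{ind}) ≤ (1/2)α². -/
/-- For the binary symmetric pairwise distribution with α-value `a`, the squared
Hellinger distance to the uniform (independent) distribution is at most `a²/2`. -/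
theorem hellinger_sym_to_indep (a : ℝ) (h1 : -1 ≤ a) (h2 : a ≤ 1) :
    (1/2) * ∑ x : Bool × Bool,
        (Real.sqrt (if x.1 = x.2 then (1+a)/4 else (1-a)/4) - Real.sqrt (1/4))^2
      ≤ (1/2) * a^2 := by
  have hp : (0:ℝ) ≤ 1 + a := by linarith
  have hm : (0:ℝ) ≤ 1 - a := by linarith
  set s := Real.sqrt (1 + a) with hs
  set t := Real.sqrt (1 - a) with ht
  have hs0 : 0 ≤ s := Real.sqrt_nonneg _
  have ht0 : 0 ≤ t := Real.sqrt_nonneg _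
  have hs2 : s ^ 2 = 1 + a := Real.sq_sqrt hp
  have ht2 : t ^ 2 = 1 - a := Real.sq_sqrt hm
  have h4 : Real.sqrt 4 = 2 := by
    rw [show (4:ℝ) = 2^2 by norm_num, Real.sqrt_sq (by norm_num)]
  have hq : Real.sqrt ((1:ℝ)/4) = 1/2 := by
    rw [Real.sqrt_div (by norm_num), h4]; simp
  have hqp : Real.sqrt ((1+a)/4) = s/2 := by rw [Real.sqrt_div hp, h4]
  have hqm : Real.sqrt ((1-a)/4) = t/2 := by rw [Real.sqrt_div hm, h4]
  have hsum : ∑ x : Bool × Bool,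
      (Real.sqrt (if x.1 = x.2 then (1+a)/4 else (1-a)/4) - Real.sqrt (1/4))^2
      = 2 * (s/2 - 1/2)^2 + 2 * (t/2 - 1/2)^2 := by
    rw [Fintype.sum_prod_type]
    simp only [Fintype.sum_bool]
    simp [hq, hqp, hqm, h4]
    ring
  rw [hsum]
  -- reduces to 2 - a^2 ≤ s + t
  have hst : (s * t)^2 = 1 - a^2 := by rw [mul_pow, hs2, ht2]; ring
  have hst0 : 0 ≤ s * t := mul_nonneg hs0 ht0
  have hst1 : s * t ≤ 1 := by nlinarith [sq_nonneg a]
  set p := s * t with hpdef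
  have hu2 : (s + t)^2 = 2 + 2*p := by rw [add_sq, hs2, ht2]; ring
  have hcube : (1 - p) * (p^3 + p^2 + 3*p + 1) ≥ 0 := by
    apply mul_nonneg (by linarith)
    nlinarith [pow_nonneg hst0 3, sq_nonneg p]
  have hsq : (s + t)^2 ≥ (1 + p^2)^2 := by nlinarith
  have key : 1 + p^2 ≤ s + t :=
    (pow_le_pow_iff_left₀ (by positivity) (add_nonneg hs0 ht0) two_ne_zero).mp hsq
  have heq : 2 - a^2 = 1 + p^2 := by rw [hst]; ring
  have hgoal : (1:ℝ)/2 * (2*(s/2 - 1/2)^2 + 2*(t/2 - 1/2)^2) = 1 - (s + t)/2 := by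
    have e1 : (s/2 - 1/2)^2 = s^2/4 - s/2 + 1/4 := by ring
    have e2 : (t/2 - 1/2)^2 = t^2/4 - t/2 + 1/4 := by ring
    rw [e1, e2, hs2, ht2]; ring
  rw [hgoal]
  linarith [key, heq]
end

section
/- Let P_{ijk} be the distribution of a 3-node symmetric binary Markov chain on a path in order i, j, k, with edge α-values α_{ij} ≥ 0 and α_{jk} = 1 - δ for δ ∈ [0,1]. Let Q be the Markov chain in order i, k, j with pairwise marginals equal to those of P for (i,k) and (j,k). Then H²(P_{ijk}, Q) ≤ 2 α_{ij}² δ. -/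
/-- The symmetric-edge weight: probability of agreement/disagreement for a symmetric
binary pair with α-value `α`. -/
noncomputable def symEdge (α : ℝ) (p : Prop) [Decidable p] : ℝ :=
  if p then (1+α)/2 else (1-α)/2

lemma sqrt_diff_sq_le (p q c : ℝ) (hp : 0 ≤ p) (hq : 0 ≤ q) (hc : 0 ≤ c)
    (h : (p - q)^2 ≤ c * (p + q)) : (Real.sqrt p - Real.sqrt q)^2 ≤ c := by
  have hs := Real.sqrt_nonneg p
  have ht := Real.sqrt_nonneg q
  have hp' := Real.sq_sqrt hp
  have hq' := Real.sq_sqrt hq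
  set s := Real.sqrt p
  set t := Real.sqrt q
  rcases eq_or_lt_of_le (add_nonneg hs ht) with h0 | h0
  · have hs0 : s = 0 := by linarith
    have ht0 : t = 0 := by linarith
    simpa [hs0, ht0] using hc
  · have key : (s - t)^2 * (s + t)^2 ≤ c * (s + t)^2 := by
      nlinarith [mul_nonneg (mul_nonneg hc hs) ht]
    exact le_of_mul_le_mul_right key (by positivity)

set_option maxHeartbeats 2000000 in
/-- For the symmetric binary Markov chain `P` on `(X_i, X_j, X_k)` (in the order `i,j,k`)
with edge α-values `a = α_{ij} ≥ 0` and `α_{jk} = 1 - d`, and `Q` the Markov chain in the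
order `i,k,j` with pairwise marginals agreeing with those of `P` on `(i,k)` and `(j,k)`,
we have `H²(P,Q) ≤ 2 a² d`. -/
theorem hellinger_two_chains (a d : ℝ)
    (ha0 : 0 ≤ a) (ha1 : a ≤ 1) (hd0 : 0 ≤ d) (hd1 : d ≤ 1) :
    (1/2) * ∑ x : Bool × Bool × Bool,
        (Real.sqrt ((1/2) * symEdge a (x.1 = x.2.1) * symEdge (1-d) (x.2.1 = x.2.2))
          - Real.sqrt ((1/2) * symEdge (a*(1-d)) (x.1 = x.2.2)
              * symEdge (1-d) (x.2.1 = x.2.2)))^2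
      ≤ 2 * a^2 * d := by
  simp only [Fintype.sum_prod_type, Fintype.sum_bool, symEdge]
  norm_num
  have hA : (0:ℝ) ≤ 1 + a := by linarith
  have hB : (0:ℝ) ≤ 1 - a := by linarith
  have hD : (0:ℝ) ≤ 1 + (1 - d) := by linarith
  have hE : (0:ℝ) ≤ 1 + a * (1 - d) := by nlinarith
  have hF : (0:ℝ) ≤ 1 - a * (1 - d) := by nlinarith [mul_nonneg ha0 hd0]
  have hc : (0:ℝ) ≤ a ^ 2 * d := by positivity
  have ht : (0:ℝ) ≤ a ^ 2 * d * (2 - d) :=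
    mul_nonneg hc (by linarith)
  have ht2 : (0:ℝ) ≤ a ^ 2 * d ^ 2 := by positivity
  have fact1 : d * (2 - d) ≤ 2 + a * (2 - d) := by
    nlinarith [sq_nonneg (1 - d), mul_nonneg ha0 hD]
  have fact2 : (2 - d) ^ 2 ≤ 4 + 2 * (a * d) := by
    nlinarith [mul_nonneg ha0 hd0]
  have fact3 : (2 - d) ^ 2 ≤ 4 - 2 * (a * d) := by
    nlinarith [mul_nonneg hd0 (show (0:ℝ) ≤ 4 - d - 2 * a by linarith)]
  have fact4 : d * (2 - d) ≤ 2 * (2 - a * (2 - d)) := by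
    nlinarith [mul_nonneg hB hD, sq_nonneg d]
  have h1 : (Real.sqrt (1/2 * ((1+a)/2) * ((1+(1-d))/2))
      - Real.sqrt (1/2 * ((1+a*(1-d))/2) * ((1+(1-d))/2)))^2 <= a^2*d/8 := by
    apply sqrt_diff_sq_le _ _ _ (by nlinarith [mul_nonneg hA hD]) (by nlinarith [mul_nonneg hE hD]) (by positivity)
    nlinarith [mul_le_mul_of_nonneg_left fact1 ht]
  have h2 : (Real.sqrt (1/2 * ((1+a)/2) * (d/2))
      - Real.sqrt (1/2 * ((1-a*(1-d))/2) * (d/2)))^2 <= a^2*d/4 := by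
    apply sqrt_diff_sq_le _ _ _ (by nlinarith [mul_nonneg hA hd0]) (by nlinarith [mul_nonneg hF hd0]) (by positivity)
    nlinarith [mul_le_mul_of_nonneg_left fact2 ht2]
  have h3 : (Real.sqrt (1/2 * ((1-a)/2) * (d/2))
      - Real.sqrt (1/2 * ((1+a*(1-d))/2) * (d/2)))^2 <= a^2*d/4 := by
    apply sqrt_diff_sq_le _ _ _ (by nlinarith [mul_nonneg hB hd0]) (by nlinarith [mul_nonneg hE hd0]) (by positivity)
    nlinarith [mul_le_mul_of_nonneg_left fact3 ht2]
  have h4 : (Real.sqrt (1/2 * ((1-a)/2) * ((1+(1-d))/2))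
      - Real.sqrt (1/2 * ((1-a*(1-d))/2) * ((1+(1-d))/2)))^2 <= a^2*d/4 := by
    apply sqrt_diff_sq_le _ _ _ (by nlinarith [mul_nonneg hB hD]) (by nlinarith [mul_nonneg hF hD]) (by positivity)
    nlinarith [mul_le_mul_of_nonneg_left fact4 ht]
  linarith
end

section
/- For a joint distribution P on binary variables X_i, X_j over {1,-1}, I_{H²}(P_{ij}) ≤ 2·minmrg(P_{ij}), where I_{H²}(P_{ij}) = H²(P_{ij}, P_{ij}^{ind}) and P_{ij}^{ind} is the product of the marginals of P_{ij}. -/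
lemma sqrt_lb_aux (u v t : ℝ) (hu : 0 ≤ u) (hv : 0 ≤ v)
    (h1 : u - v ≤ t) (h2 : v - u ≤ t) :
    (u + v - t) / 2 ≤ Real.sqrt (u * v) := by
  rcases le_total u v with h | h
  · have h3 : u ≤ Real.sqrt (u * v) := by
      nth_rewrite 1 [← Real.sqrt_mul_self hu]
      exact Real.sqrt_le_sqrt (by nlinarith)
    linarith
  · have h3 : v ≤ Real.sqrt (u * v) := by
      nth_rewrite 1 [← Real.sqrt_mul_self hv]
      exact Real.sqrt_le_sqrt (by nlinarith)
    linarith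

/-- `I_{H²}(P_{ij}) ≤ 2 · minmrg(P_{ij})` for any pairwise distribution `P` on
`{1,-1}²` (modelled by `Bool × Bool`), where `I_{H²}` is the squared Hellinger distance
from the product of the marginals and `minmrg` is the minimum marginal probability. -/
theorem ih2_le_two_minmrg (P : Bool → Bool → ℝ)
    (hnn : ∀ x y, 0 ≤ P x y)
    (hsum : ∑ x : Bool, ∑ y : Bool, P x y = 1) :
    1 - ∑ x : Bool, ∑ y : Bool,
        Real.sqrt (P x y * (∑ y' : Bool, P x y') * (∑ x' : Bool, P x' y))
      ≤ 2 * min (min (∑ y' : Bool, P true y') (∑ y' : Bool, P false y'))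
            (min (∑ x' : Bool, P x' true) (∑ x' : Bool, P x' false)) := by
  simp only [Fintype.sum_bool] at hsum ⊢
  have ha := hnn true true
  have hb := hnn true false
  have hc := hnn false true
  have hd := hnn false false
  set a := P true true with haa
  set b := P true false with hbb
  set c := P false true with hcc
  set d := P false false with hdd
  set m := min (min (a + b) (c + d)) (min (a + c) (b + d)) with hm
  have hm1 : a * d - b * c ≤ m := by
    refine le_min (le_min ?_ ?_) (le_min ?_ ?_) <;> nlinarith
  have hm2 : b * c - a * d ≤ m := by
    refine le_min (le_min ?_ ?_) (le_min ?_ ?_) <;> nlinarith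
  have k1 : a - (a + b) * (a + c) = a * d - b * c := by linear_combination (-a) * hsum
  have k2 : b - (a + b) * (b + d) = b * c - a * d := by linear_combination (-b) * hsum
  have k3 : c - (c + d) * (a + c) = b * c - a * d := by linear_combination (-c) * hsum
  have k4 : d - (c + d) * (b + d) = a * d - b * c := by linear_combination (-d) * hsum
  have t1 : (a + (a + b) * (a + c) - m) / 2 ≤ Real.sqrt (a * (a + b) * (a + c)) := by
    rw [mul_assoc]
    exact sqrt_lb_aux _ _ _ ha (by positivity) (by linarith) (by linarith)
  have t2 : (b + (a + b) * (b + d) - m) / 2 ≤ Real.sqrt (b * (a + b) * (b + d)) := by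
    rw [mul_assoc]
    exact sqrt_lb_aux _ _ _ hb (by positivity) (by linarith) (by linarith)
  have t3 : (c + (c + d) * (a + c) - m) / 2 ≤ Real.sqrt (c * (c + d) * (a + c)) := by
    rw [mul_assoc]
    exact sqrt_lb_aux _ _ _ hc (by positivity) (by linarith) (by linarith)
  have t4 : (d + (c + d) * (b + d) - m) / 2 ≤ Real.sqrt (d * (c + d) * (b + d)) := by
    rw [mul_assoc]
    exact sqrt_lb_aux _ _ _ hd (by positivity) (by linarith) (by linarith)
  have q : (a + b) * (a + c) + (a + b) * (b + d) + (c + d) * (a + c) + (c + d) * (b + d) = 1 := by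
    linear_combination (a + b + c + d + 1) * hsum
  linarith
end

section
/- For any joint distribution P on binary variables X_i, X_j over {1,-1} with minmrg(P_{ij}) > 0: mindisc(P_{ij}) ≥ 1 - 2·mindiag(P_{ij})/minmrg(P_{ij}). -/
/-- The first marginal of a pairwise distribution on `Bool × Bool`. -/
noncomputable def margI (P : Bool → Bool → ℝ) (x : Bool) : ℝ := ∑ y : Bool, P x y

/-- The second marginal of a pairwise distribution on `Bool × Bool`. -/
noncomputable def margJ (P : Bool → Bool → ℝ) (y : Bool) : ℝ := ∑ x : Bool, P x y

/-- The minimum marginal probability of a pairwise distribution. -/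
noncomputable def minmrg2 (P : Bool → Bool → ℝ) : ℝ :=
  min (min (margI P true) (margI P false)) (min (margJ P true) (margJ P false))

/-- `mindiag`: the smaller of the probabilities of agreement and disagreement. -/
noncomputable def mindiag (P : Bool → Bool → ℝ) : ℝ :=
  min (P true true + P false false) (P true false + P false true)

/-- `mindisc`: the smaller of the two conditional-probability discrepancies. -/
noncomputable def mindisc (P : Bool → Bool → ℝ) : ℝ :=
  min |P true true / margJ P true - P true false / margJ P false|
      |P true true / margI P true - P false true / margI P false|

/-- Both `a/(a+c) - b/(b+d)` and its negative are `1` minus two fractions with denominators `≥ m`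
whose numerators form a diagonal, `b + c` or `a + d`. -/
lemma one_sub_min_div_le_abs_sub_div {a b c d m : ℝ} (ha : 0 ≤ a) (hb : 0 ≤ b) (hc : 0 ≤ c)
    (hd : 0 ≤ d) (hm : 0 < m) (hac : m ≤ a + c) (hbd : m ≤ b + d) :
    1 - min (a + d) (b + c) / m ≤ |a / (a + c) - b / (b + d)| := by
  have hac' : a + c ≠ 0 := (hm.trans_le hac).ne'
  have hbd' : b + d ≠ 0 := (hm.trans_le hbd).ne'
  have ha_le : a / (a + c) ≤ a / m := by gcongr
  have hb_le : b / (b + d) ≤ b / m := by gcongr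
  have hc_le : c / (a + c) ≤ c / m := by gcongr
  have hd_le : d / (b + d) ≤ d / m := by gcongr
  have hac_eq : a / (a + c) = 1 - c / (a + c) := by field_simp; ring
  have hbd_eq : b / (b + d) = 1 - d / (b + d) := by field_simp; ring
  rcases min_choice (a + d) (b + c) with h | h <;> rw [h, add_div]
  · calc 1 - (a / m + d / m) ≤ -(a / (a + c) - b / (b + d)) := by linarith
      _ ≤ _ := neg_le_abs _
  · calc 1 - (b / m + c / m) ≤ a / (a + c) - b / (b + d) := by linarith
      _ ≤ _ := le_abs_self _

lemma margI_eq (P : Bool → Bool → ℝ) (x : Bool) : margI P x = P x true + P x false := by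
  simp [margI]

lemma margJ_eq (P : Bool → Bool → ℝ) (y : Bool) : margJ P y = P true y + P false y := by
  simp [margJ]

lemma minmrg2_le_margI (P : Bool → Bool → ℝ) (x : Bool) : minmrg2 P ≤ margI P x := by
  cases x
  · exact (min_le_left _ _).trans (min_le_right _ _)
  · exact (min_le_left _ _).trans (min_le_left _ _)

lemma minmrg2_le_margJ (P : Bool → Bool → ℝ) (y : Bool) : minmrg2 P ≤ margJ P y := by
  cases y
  · exact (min_le_right _ _).trans (min_le_right _ _)
  · exact (min_le_right _ _).trans (min_le_left _ _)

lemma mindiag_nonneg {P : Bool → Bool → ℝ} (hnn : ∀ x y, 0 ≤ P x y) : 0 ≤ mindiag P :=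
  le_min (add_nonneg (hnn _ _) (hnn _ _)) (add_nonneg (hnn _ _) (hnn _ _))

lemma one_sub_mindiag_div_le_mindisc {P : Bool → Bool → ℝ} (hnn : ∀ x y, 0 ≤ P x y)
    (hpos : 0 < minmrg2 P) : 1 - mindiag P / minmrg2 P ≤ mindisc P := by
  have hI := minmrg2_le_margI P
  have hJ := minmrg2_le_margJ P
  simp only [mindisc, mindiag, margI_eq, margJ_eq] at hI hJ ⊢
  refine le_min ?_ ?_
  · exact one_sub_min_div_le_abs_sub_div (hnn _ _) (hnn _ _) (hnn _ _) (hnn _ _) hpos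
      (hJ true) (hJ false)
  · have := one_sub_min_div_le_abs_sub_div (hnn _ _) (hnn _ _) (hnn _ _) (hnn _ _) hpos
      (hI true) (hI false)
    rwa [add_comm (P false true) (P true false)] at this

theorem mindisc_ge_one_sub_general (P : Bool → Bool → ℝ)
    (hnn : ∀ x y, 0 ≤ P x y)
    (hpos : 0 < minmrg2 P) :
    1 - 2 * (mindiag P / minmrg2 P) ≤ mindisc P := by
  have hratio : 0 ≤ mindiag P / minmrg2 P := div_nonneg (mindiag_nonneg hnn) hpos.le
  linarith [one_sub_mindiag_div_le_mindisc hnn hpos]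

/-- `mindisc(P_{ij}) ≥ 1 - 2·mindiag(P_{ij})/minmrg(P_{ij})`. -/
theorem mindisc_ge_one_sub (P : Bool → Bool → ℝ)
    (hnn : ∀ x y, 0 ≤ P x y)
    (hsum : ∑ x : Bool, ∑ y : Bool, P x y = 1)
    (hpos : 0 < minmrg2 P) :
    1 - 2 * (mindiag P / minmrg2 P) ≤ mindisc P :=
  mindisc_ge_one_sub_general P hnn hpos
end
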